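/- arXiv:math/0408393 — 2 statements merged into one kernel-verified Lean document; each statement's English description precedes it below -/
import Mathlib

section
/- (Proposition 3) Let p be a prime and let G be a finitely generated torsion-free nilpotent group. If G is conjugacy F_p-separable, then G is abelian. -/
/-- `G` is conjugacy `F_p`-separable: whenever `a, b ∈ G` are not conjugate in `G`,
there exists a surjective homomorphism `φ` of `G` onto some finite `p`-group `X`
such that `φ a` and `φ b` are not conjugate in `X`. -/
def IsConjFpSeparable (p : ℕ) (G : Type) [Group G] : Prop :=
  ∀ a b : G, ¬ IsConj a b →
    ∃ (X : Type) (_ : Group X) (_ : Fintype X),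
      IsPGroup p X ∧
      ∃ φ : G →* X, Function.Surjective φ ∧ ¬ IsConj (φ a) (φ b)

/-!
If `G` is not abelian, nilpotency gives `x` in the second centre but not in the centre, so
`g ↦ ⁅g, x⁆` is a homomorphism into the centre and `g x^q g⁻¹ = ⁅g, x⁆^q x^q`. Its image is a
finitely generated torsion-free abelian group, i.e. a free abelian group, so a nontrivial
commutator `z = ⁅y, x⁆` is not a `q`-th power there for every large prime `q`; hence `x^q` and
`z x^q` are not conjugate. In a finite `p`-group quotient, however, `q` is invertible modulo the
order of the image of `z`, so the image of `z` is that of `⁅y, x⁆^(m q) = ⁅y^m, x⁆^q` for some `m`,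
and conjugating by `y^m` identifies the images of `x^q` and `z x^q`.
-/

open Subgroup (center mem_center_iff)
open scoped commutatorElement

theorem exists_forall_nsmul_ne {M : Type*} [AddCommGroup M] [AddGroup.FG M] [IsAddTorsionFree M]
    {z : M} (hz : z ≠ 0) : ∃ N : ℕ, ∀ n, N < n → ∀ a : M, n • a ≠ z := by
  have : Module.Finite ℤ M := Module.Finite.iff_addGroup_fg.mpr ‹_›
  let b := Module.Free.chooseBasis ℤ M
  obtain ⟨i, hi⟩ : ∃ i, b.repr z i ≠ 0 := by
    by_contra! h
    exact hz (b.repr.map_eq_zero_iff.mp (Finsupp.ext h))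
  refine ⟨(b.repr z i).natAbs, fun n hn a ha ↦ ?_⟩
  have hdvd : n ∣ (b.repr z i).natAbs :=
    Int.natCast_dvd.mp ⟨b.repr a i, by simp [← ha]⟩
  exact (Nat.le_of_dvd (Int.natAbs_pos.mpr hi) hdvd).not_gt hn

theorem MonoidHom.exists_forall_map_pow_ne {G A : Type*} [Group G] [Group.FG G] [CommGroup A]
    [IsMulTorsionFree A] (f : G →* A) {y : G} (hy : f y ≠ 1) :
    ∃ N : ℕ, ∀ n, N < n → ∀ g, f g ^ n ≠ f y := by
  obtain ⟨N, hN⟩ := exists_forall_nsmul_ne (M := Additive f.range)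
    (z := .ofMul ⟨f y, y, rfl⟩) (by simpa [Subtype.ext_iff] using hy)
  exact ⟨N, fun n hn g h ↦ hN n hn (.ofMul ⟨f g, g, rfl⟩) (by ext; simpa using h)⟩

theorem Group.IsNilpotent.exists_mem_upperCentralSeries_two_notMem_center {G : Type*} [Group G]
    [Group.IsNilpotent G] (h : center G ≠ ⊤) :
    ∃ x ∈ Subgroup.upperCentralSeries G 2, x ∉ center G := by
  by_contra! h2
  have hle : ∀ n, Subgroup.upperCentralSeries G n ≤ center G := by
    intro n
    induction n with
    | zero => simp
    | succ n ih =>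
      refine fun x hx ↦ h2 x <| Subgroup.mem_upperCentralSeries_succ_iff.mpr fun y ↦ ?_
      rw [Subgroup.upperCentralSeries_one]
      exact ih (Subgroup.mem_upperCentralSeries_succ_iff.mp hx y)
  obtain ⟨n, hn⟩ := Group.IsNilpotent.nilpotent (G := G)
  exact h (top_le_iff.mp (hn ▸ hle n))

section CentralCommutators

variable {G : Type*} [Group G] {x : G}

theorem commutatorElement_mem_center_of_mem_upperCentralSeries_two
    (hx : x ∈ Subgroup.upperCentralSeries G 2) (g : G) : ⁅g, x⁆ ∈ center G := by
  rw [← commutatorElement_inv, ← Subgroup.upperCentralSeries_one]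
  exact inv_mem (Subgroup.mem_upperCentralSeries_succ_iff.mp hx g)

def commutatorElementHom (x : G) (hx : ∀ g : G, ⁅g, x⁆ ∈ center G) : G →* center G :=
  MonoidHom.mk' (fun g ↦ ⟨⁅g, x⁆, hx g⟩) fun g h ↦ by
    ext
    change ⁅g * h, x⁆ = ⁅g, x⁆ * ⁅h, x⁆
    rw [commutatorElement_mul_left_eq_conj_mul, mem_center_iff.mp (hx h) g, mul_inv_cancel_right,
      mem_center_iff.mp (hx g)]

@[simp]
theorem coe_commutatorElementHom (hx : ∀ g : G, ⁅g, x⁆ ∈ center G) (g : G) :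
    (commutatorElementHom x hx g : G) = ⁅g, x⁆ := rfl

theorem conj_pow_eq_commutatorElement_pow_mul (hx : ∀ g : G, ⁅g, x⁆ ∈ center G) (g : G) (n : ℕ) :
    g * x ^ n * g⁻¹ = ⁅g, x⁆ ^ n * x ^ n := by
  rw [← MulAut.conj_apply, map_pow, conj_eq_commutatorElement_mul,
    Commute.mul_pow (mem_center_iff.mp (hx g) x).symm]

open scoped IsMulCommutative in
theorem exists_forall_commutatorElement_pow_ne [Group.FG G]
    (htf : ∀ g : G, g ≠ 1 → ¬IsOfFinOrder g) (hx : ∀ g : G, ⁅g, x⁆ ∈ center G) {y : G}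
    (hy : ⁅y, x⁆ ≠ 1) : ∃ N : ℕ, ∀ n, N < n → ∀ g : G, ⁅g, x⁆ ^ n ≠ ⁅y, x⁆ := by
  have : IsMulTorsionFree (center G) := .of_not_isOfFinOrder fun a ha hfin ↦
    htf a (by simpa using ha) ((center G).subtype.isOfFinOrder hfin)
  obtain ⟨N, hN⟩ := (commutatorElementHom x hx).exists_forall_map_pow_ne
    (y := y) (by simpa [Subtype.ext_iff] using hy)
  exact ⟨N, fun n hn g h ↦ hN n hn g (Subtype.ext (by simpa using h))⟩

theorem not_isConj_pow_commutatorElement_mul_pow (hx : ∀ g : G, ⁅g, x⁆ ∈ center G) {y : G}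
    {n : ℕ} (hn : ∀ g : G, ⁅g, x⁆ ^ n ≠ ⁅y, x⁆) : ¬IsConj (x ^ n) (⁅y, x⁆ * x ^ n) := by
  intro hconj
  obtain ⟨g, hg⟩ := isConj_iff.mp hconj
  rw [conj_pow_eq_commutatorElement_pow_mul hx] at hg
  exact hn g (mul_right_cancel hg)

theorem IsPGroup.isConj_map_pow_commutatorElement_mul_pow {p : ℕ} {X : Type*} [Group X]
    (hX : IsPGroup p X) (hx : ∀ g : G, ⁅g, x⁆ ∈ center G) (φ : G →* X) (y : G) {n : ℕ}
    (hn : p.Coprime n) : IsConj (φ (x ^ n)) (φ (⁅y, x⁆ * x ^ n)) := by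
  obtain ⟨m, hm⟩ := exists_pow_eq_self_of_coprime (hX.orderOf_coprime hn (φ ⁅y, x⁆)).symm
  have hpow : ⁅y ^ m, x⁆ = ⁅y, x⁆ ^ m :=
    congrArg Subtype.val (map_pow (commutatorElementHom x hx) y m)
  refine isConj_iff.mpr ⟨φ (y ^ m), ?_⟩
  rw [← map_inv, ← map_mul, ← map_mul, conj_pow_eq_commutatorElement_pow_mul hx, hpow, map_mul,
    map_mul, map_pow, map_pow, ← pow_mul, mul_comm, pow_mul, hm]

end CentralCommutators

/-- (Proposition 3) Let `p` be a prime and `G` a finitely generated torsion-free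
nilpotent group. If `G` is conjugacy `F_p`-separable, then `G` is abelian. -/
theorem comm_of_conjFpSeparable_of_torsionFree
    (p : ℕ) (hp : p.Prime) (G : Type) [Group G] [Group.FG G] [Group.IsNilpotent G]
    (htf : ∀ g : G, g ≠ 1 → ¬ IsOfFinOrder g)
    (h : IsConjFpSeparable p G) :
    ∀ x y : G, x * y = y * x := by
  intro a b
  by_contra hab
  obtain ⟨x, hx2, hxZ⟩ := Group.IsNilpotent.exists_mem_upperCentralSeries_two_notMem_center
    fun hZ ↦ hab (mem_center_iff.mp (hZ ▸ Subgroup.mem_top b) a)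
  have hx := commutatorElement_mem_center_of_mem_upperCentralSeries_two hx2
  obtain ⟨y, hy⟩ : ∃ y : G, ⁅y, x⁆ ≠ 1 := by
    simpa only [mem_center_iff, not_forall, ne_eq, commutatorElement_eq_one_iff_mul_comm] using hxZ
  obtain ⟨N, hN⟩ := exists_forall_commutatorElement_pow_ne htf hx hy
  obtain ⟨q, hqN, hq⟩ := Nat.exists_infinite_primes (max N p + 1)
  have hpq : p.Coprime q := (Nat.coprime_primes hp hq).mpr (by omega)
  obtain ⟨X, _, _, hX, φ, -, hφ⟩ :=
    h _ _ (not_isConj_pow_commutatorElement_mul_pow hx (hN q (by omega)))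
  exact hφ (hX.isConj_map_pow_commutatorElement_mul_pow hx φ y hpq)
end

section
/- (Proposition 4) Let p be a prime and let G be a group having a finite normal subgroup F such that the quotient group G/F is a finitely generated abelian group. If G is residually a finite p-group, then G is conjugacy F_p-separable. -/
/-- `G` is residually a finite `p`-group: for every non-identity `a ∈ G` there exists
a surjective homomorphism `φ` of `G` onto some finite `p`-group `X` with `φ a ≠ 1`. -/
def IsResiduallyFpGroup (p : ℕ) (G : Type) [Group G] : Prop :=
  ∀ a : G, a ≠ 1 →
    ∃ (X : Type) (_ : Group X) (_ : Fintype X),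
      IsPGroup p X ∧
      ∃ φ : G →* X, Function.Surjective φ ∧ φ a ≠ 1

theorem IsPGroup.pi {p : ℕ} {ι : Type*} [Finite ι] {X : ι → Type*} [∀ i, Group (X i)]
    (h : ∀ i, IsPGroup p (X i)) : IsPGroup p (∀ i, X i) := by
  cases nonempty_fintype ι
  intro g
  choose k hk using fun i => h i (g i)
  refine ⟨Finset.univ.sup k, funext fun i => ?_⟩
  obtain ⟨m, hm⟩ := Nat.exists_eq_add_of_le (Finset.le_sup (Finset.mem_univ i) : k i ≤ _)
  rw [Pi.pow_apply, hm, pow_add, pow_mul, hk i, one_pow, Pi.one_apply]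

theorem MonoidHom.image_conjugatesOf_of_surjective {G H : Type*} [Group G] [Group H]
    {f : G →* H} (hf : Function.Surjective f) (b : G) :
    f '' conjugatesOf b = conjugatesOf (f b) := by
  refine Set.Subset.antisymm (Set.image_subset_iff.mpr fun c hc => f.map_isConj hc) ?_
  intro y hy
  obtain ⟨x, rfl⟩ := isConj_iff.mp hy
  obtain ⟨g, rfl⟩ := hf x
  exact ⟨g * b * g⁻¹, isConj_iff.mpr ⟨g, rfl⟩, by simp⟩

theorem finite_conjugatesOf_of_commute_quotient {G : Type*} [Group G] (F : Subgroup G) [F.Normal]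
    [Finite F] (hab : ∀ x y : G ⧸ F, x * y = y * x) (b : G) : (conjugatesOf b).Finite := by
  refine ((F : Set G).toFinite.image (· * b)).subset ?_
  intro c hc
  obtain ⟨u, rfl⟩ := isConj_iff.mp hc
  refine ⟨u * b * u⁻¹ * b⁻¹, ?_, by group⟩
  rw [SetLike.mem_coe, ← QuotientGroup.eq_one_iff]
  simp only [QuotientGroup.mk_mul, QuotientGroup.mk_inv, hab (u : G ⧸ F) b]
  group

namespace IsResiduallyFpGroup

variable {p : ℕ} {G : Type} [Group G]

theorem exists_separating_of_finite (hres : IsResiduallyFpGroup p G) {a : G} {S : Set G}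
    (hS : S.Finite) (haS : a ∉ S) :
    ∃ (X : Type) (_ : Group X) (_ : Fintype X), IsPGroup p X ∧
      ∃ φ : G →* X, Function.Surjective φ ∧ φ a ∉ φ '' S := by
  have key (c : S) : ∃ (X : Type) (_ : Group X) (_ : Fintype X), IsPGroup p X ∧
      ∃ φ : G →* X, Function.Surjective φ ∧ φ a ≠ φ c := by
    have hne : a * (c : G)⁻¹ ≠ 1 := fun h => haS (mul_inv_eq_one.mp h ▸ c.2)
    obtain ⟨X, _, _, hpX, φ, hsurj, hφ⟩ := hres _ hne
    refine ⟨X, ‹_›, ‹_›, hpX, φ, hsurj, fun h => hφ ?_⟩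
    rw [map_mul, map_inv, h, mul_inv_cancel]
  choose X _ _ hpX φ _ hφ using key
  have := hS.to_subtype
  let Φ : G →* ∀ c : S, X c := MonoidHom.pi φ
  refine ⟨Φ.range, inferInstance, Fintype.ofFinite _, (IsPGroup.pi hpX).to_subgroup _,
    Φ.rangeRestrict, Φ.rangeRestrict_surjective, ?_⟩
  rintro ⟨c, hc, hca⟩
  exact hφ ⟨c, hc⟩ (congrFun (congrArg Subtype.val hca).symm ⟨c, hc⟩)

theorem isConjFpSeparable_of_finite_conjugatesOf (hres : IsResiduallyFpGroup p G)
    (hfin : ∀ b : G, (conjugatesOf b).Finite) : IsConjFpSeparable p G := by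
  intro a b hab
  obtain ⟨X, _, _, hpX, φ, hsurj, hφ⟩ :=
    hres.exists_separating_of_finite (hfin b)
      (show a ∉ conjugatesOf b from fun h => hab h.symm)
  refine ⟨X, ‹_›, ‹_›, hpX, φ, hsurj, fun h => hφ ?_⟩
  rw [φ.image_conjugatesOf_of_surjective hsurj]
  exact h.symm

end IsResiduallyFpGroup

theorem conjFpSeparable_of_residuallyFp_general
    (p : ℕ) (G : Type) [Group G]
    (F : Subgroup G) [F.Normal] (hF : Finite F)
    (hab : ∀ x y : G ⧸ F, x * y = y * x)
    (hres : IsResiduallyFpGroup p G) :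
    IsConjFpSeparable p G :=
  hres.isConjFpSeparable_of_finite_conjugatesOf (finite_conjugatesOf_of_commute_quotient F hab)

/-- (Proposition 4) Let `p` be a prime and `G` a group with a finite normal subgroup
`F` such that `G ⧸ F` is a finitely generated abelian group. If `G` is residually a
finite `p`-group, then `G` is conjugacy `F_p`-separable. -/
theorem conjFpSeparable_of_residuallyFp
    (p : ℕ) (hp : p.Prime) (G : Type) [Group G]
    (F : Subgroup G) [F.Normal] (hF : Finite F)
    (hfg : Group.FG (G ⧸ F)) (hab : ∀ x y : G ⧸ F, x * y = y * x)
    (hres : IsResiduallyFpGroup p G) :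
    IsConjFpSeparable p G :=
  conjFpSeparable_of_residuallyFp_general p G F hF hab hres
end
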